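/- arXiv:2401.06047 — 2 statements merged into one kernel-verified Lean document; each statement's English description precedes it below -/
import Mathlib

section
/- Let Z = {(R_1,s_1),...,(R_n,s_n)} be a training set of ranges with selectivities, and let P be a set of representative points containing exactly one point from each equivalence class (under same-range-membership) of ℝ^d with respect to {R_1,...,R_n}. Then the minimum of err_1(D,Z) = (1/n)∑_i |s_D(R_i) − s_i| over all discrete distributions D equals the minimum over discrete distributions whose support is contained in P. -/
/-!
Map every point to the representative of its class and move its weight along. A range
cannot tell a point from its representative, so the pushed-forward distribution has the
same selectivity on every range, hence the same error, and it is supported in `P`.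
-/

open Finset

section Pushforward

variable {α β : Type*} [DecidableEq β] (supp : Finset α) (w : α → ℝ) (f : α → β)

/-- The weight that the pushforward of `∑ p ∈ supp, w p • δ_p` along `f` puts on `q`. -/
def pushWeight (q : β) : ℝ := ∑ p ∈ supp with f p = q, w p

theorem pushWeight_pos (hw : ∀ p ∈ supp, 0 < w p) :
    ∀ q ∈ supp.image f, 0 < pushWeight supp w f q := by
  intro q hq
  obtain ⟨p, hp, rfl⟩ := mem_image.mp hq
  exact sum_pos (fun x hx => hw x (mem_filter.mp hx).1) ⟨p, mem_filter.mpr ⟨hp, rfl⟩⟩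

theorem sum_image_pushWeight : ∑ q ∈ supp.image f, pushWeight supp w f q = ∑ p ∈ supp, w p :=
  sum_image' w fun _ _ => rfl

theorem sum_image_indicator_pushWeight {S : Set α} {T : Set β} (hST : ∀ x, x ∈ S ↔ f x ∈ T) :
    ∑ q ∈ supp.image f, T.indicator (fun _ => pushWeight supp w f q) q
      = ∑ p ∈ supp, S.indicator (fun _ => w p) p := by
  refine sum_image' _ fun c _ => ?_
  have hfiber : ∀ p ∈ {p ∈ supp | f p = f c}, S.indicator (fun _ => w p) p
      = T.indicator (fun _ => w p) (f c) := by
    intro p hp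
    rw [← (mem_filter.mp hp).2]
    exact Set.indicator_const_eq_indicator_const (hST p)
  rw [sum_congr rfl hfiber]
  by_cases hc : f c ∈ T <;> simp [pushWeight, hc]

end Pushforward

theorem exists_pushforward_supported {α ι : Type*} (R : ι → Set α) (P : Set α) (π : α → α)
    (hπP : ∀ x, π x ∈ P) (hπR : ∀ x i, x ∈ R i ↔ π x ∈ R i)
    (supp : Finset α) (w : α → ℝ) (hw : ∀ p ∈ supp, 0 < w p) (hws : ∑ p ∈ supp, w p = 1) :
    ∃ (supp' : Finset α) (w' : α → ℝ), ↑supp' ⊆ P ∧ (∀ p ∈ supp', 0 < w' p) ∧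
      ∑ p ∈ supp', w' p = 1 ∧ ∀ i, ∑ p ∈ supp', (R i).indicator (fun _ => w' p) p
        = ∑ p ∈ supp, (R i).indicator (fun _ => w p) p := by
  classical
  refine ⟨supp.image π, pushWeight supp w π, ?_, pushWeight_pos supp w π hw,
    (sum_image_pushWeight supp w π).trans hws,
    fun i => sum_image_indicator_pushWeight supp w π (hπR · i)⟩
  intro q hq
  obtain ⟨p, -, rfl⟩ := mem_image.mp (mem_coe.mp hq)
  exact hπP p

open Classical in
theorem stmt_1_general (d n : ℕ) (R : Fin n → Set (Fin d → ℝ)) (s : Fin n → ℝ)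
    (P : Set (Fin d → ℝ))
    (hP : ∀ x : Fin d → ℝ, ∃! p, p ∈ P ∧ ∀ i, x ∈ R i ↔ p ∈ R i) :
    sInf { e : ℝ | ∃ (supp : Finset (Fin d → ℝ)) (w : (Fin d → ℝ) → ℝ),
        (∀ p ∈ supp, 0 < w p) ∧ (∑ p ∈ supp, w p = 1) ∧
        e = (1 / n) * ∑ i, |(∑ p ∈ supp, (R i).indicator (fun _ => w p) p) - s i| }
    = sInf { e : ℝ | ∃ (supp : Finset (Fin d → ℝ)) (w : (Fin d → ℝ) → ℝ),
        (↑supp ⊆ P) ∧ (∀ p ∈ supp, 0 < w p) ∧ (∑ p ∈ supp, w p = 1) ∧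
        e = (1 / n) * ∑ i, |(∑ p ∈ supp, (R i).indicator (fun _ => w p) p) - s i| } := by
  choose π hπ using fun x => (hP x).exists
  congr 1
  ext e
  constructor
  · rintro ⟨supp, w, hw, hws, rfl⟩
    obtain ⟨supp', w', hP', hw', hws', hsel⟩ := exists_pushforward_supported R P π
      (fun x => (hπ x).1) (fun x => (hπ x).2) supp w hw hws
    exact ⟨supp', w', hP', hw', hws', by simp only [hsel]⟩
  · rintro ⟨supp, w, -, hw, hws, rfl⟩
    exact ⟨supp, w, hw, hws, rfl⟩

open Classical in
/-- The minimum `ℓ₁` empirical error over all discrete distributions equals the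
minimum over discrete distributions supported on a set `P` of representatives,
one from each equivalence class under same-range-membership. -/
theorem stmt_1 (d n : ℕ) (R : Fin n → Set (Fin d → ℝ)) (s : Fin n → ℝ)
    (hs : ∀ i, s i ∈ Set.Icc (0:ℝ) 1)
    (P : Set (Fin d → ℝ))
    (hP : ∀ x : Fin d → ℝ, ∃! p, p ∈ P ∧ ∀ i, x ∈ R i ↔ p ∈ R i) :
    sInf { e : ℝ | ∃ (supp : Finset (Fin d → ℝ)) (w : (Fin d → ℝ) → ℝ),
        (∀ p ∈ supp, 0 < w p) ∧ (∑ p ∈ supp, w p = 1) ∧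
        e = (1 / n) * ∑ i, |(∑ p ∈ supp, (R i).indicator (fun _ => w p) p) - s i| }
    = sInf { e : ℝ | ∃ (supp : Finset (Fin d → ℝ)) (w : (Fin d → ℝ) → ℝ),
        (↑supp ⊆ P) ∧ (∀ p ∈ supp, 0 < w p) ∧ (∑ p ∈ supp, w p = 1) ∧
        e = (1 / n) * ∑ i, |(∑ p ∈ supp, (R i).indicator (fun _ => w p) p) - s i| } :=
  stmt_1_general d n R s P hP
end

section
/- Consider the training set Z consisting of pairs (R_i, 0) for i = 1,…,n−1 (each R_i a rectangle in ℝ^d) together with (B, 1) for a box B. If the union of R_1,...,R_{n−1} covers B, then every discrete distribution D satisfies err_p(D, Z) > 0 for each p ∈ {1, 2, ∞}; in fact err_p(D, Z) > 1/(2n²) for p ∈ {1,2}. Conversely, if there is a point q ∈ B not covered by any R_i, then the single-point distribution D = {(q, 1)} satisfies err_p(D, Z) = 0. -/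
/-- Selectivity of a set `A` under the discrete distribution given by a finite
support `supp` and weights `w`. -/
noncomputable def sel13 (d : ℕ) (supp : Finset (Fin d → ℝ))
    (w : (Fin d → ℝ) → ℝ) (A : Set (Fin d → ℝ)) : ℝ :=
  ∑ x ∈ supp, A.indicator (fun _ => w x) x

/-!
If the `R i` cover `B`, every point of the support counted in `B` is counted in some `R i`, so
the selectivity of `B` is at most the total selectivity of the `R i`. Hence the absolute errors
`sel (R i) - 0` and `sel B - 1` always sum to at least `1`: a vector of `n` errors with sum at
least `1` has mean at least `1/n`, mean square at least `1/n²` (Cauchy–Schwarz) and a positive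
entry. An uncovered point `q ∈ B` carrying all the mass gets every selectivity right.
-/

open Finset

section Indicator

variable {α ι : Type*} [Fintype ι] {B : Set α} {R : ι → Set α} {c : ℝ}

lemma indicator_const_le_sum_indicator_const (hBR : B ⊆ ⋃ i, R i) (hc : 0 ≤ c) (x : α) :
    B.indicator (fun _ => c) x ≤ ∑ i, (R i).indicator (fun _ => c) x := by
  have hnonneg : ∀ i ∈ univ, 0 ≤ (R i).indicator (fun _ => c) x :=
    fun _ _ => Set.indicator_nonneg (fun _ _ => hc) x
  by_cases hxB : x ∈ B
  · obtain ⟨i, hxi⟩ := Set.mem_iUnion.mp (hBR hxB)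
    rw [Set.indicator_of_mem hxB]
    exact (Set.indicator_of_mem hxi (fun _ => c)).ge.trans (single_le_sum hnonneg (mem_univ i))
  · rw [Set.indicator_of_notMem hxB]
    exact sum_nonneg hnonneg

end Indicator

section Selectivity

variable {d : ℕ} {supp : Finset (Fin d → ℝ)} {w : (Fin d → ℝ) → ℝ}

lemma sel13_nonneg (hw : ∀ x ∈ supp, 0 ≤ w x) (A : Set (Fin d → ℝ)) :
    0 ≤ sel13 d supp w A :=
  sum_nonneg fun x hx => Set.indicator_nonneg (fun _ _ => hw x hx) x

lemma sel13_le_sum_of_subset_iUnion {k : ℕ} {R : Fin k → Set (Fin d → ℝ)}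
    {B : Set (Fin d → ℝ)} (hBR : B ⊆ ⋃ i, R i) (hw : ∀ x ∈ supp, 0 ≤ w x) :
    sel13 d supp w B ≤ ∑ i, sel13 d supp w (R i) := by
  unfold sel13
  rw [sum_comm]
  exact sum_le_sum fun x hx => indicator_const_le_sum_indicator_const hBR (hw x hx) x

lemma sel13_singleton_one (q : Fin d → ℝ) (A : Set (Fin d → ℝ)) :
    sel13 d {q} (fun _ => 1) A = A.indicator 1 q := by
  simp [sel13, Pi.one_def]

end Selectivity

lemma one_le_sum_abs_add_abs_sub_one {ι : Type*} {s : Finset ι} {a : ι → ℝ} {b : ℝ}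
    (ha : ∀ i ∈ s, 0 ≤ a i) (hb : b ≤ ∑ i ∈ s, a i) :
    1 ≤ ∑ i ∈ s, |a i| + |b - 1| := by
  rw [sum_congr rfl fun i hi => abs_of_nonneg (ha i hi)]
  linarith [neg_abs_le (b - 1)]

section ErrorVector

variable {ι : Type*} {s : Finset ι} {e : ι → ℝ}

lemma one_le_card_of_one_le_sum (he : 1 ≤ ∑ j ∈ s, e j) : (1 : ℝ) ≤ #s :=
  Nat.one_le_cast.mpr (card_pos.mpr (nonempty_of_sum_ne_zero (zero_lt_one.trans_le he).ne'))

lemma one_div_two_mul_sq_lt_one_div {n : ℝ} (hn : 1 ≤ n) : 1 / (2 * n ^ 2) < 1 / n := by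
  apply one_div_lt_one_div_of_lt (by positivity)
  nlinarith

lemma one_div_two_mul_card_sq_lt_mean (he : 1 ≤ ∑ j ∈ s, e j) :
    1 / (2 * (#s : ℝ) ^ 2) < 1 / #s * ∑ j ∈ s, e j :=
  calc 1 / (2 * (#s : ℝ) ^ 2) < 1 / #s :=
        one_div_two_mul_sq_lt_one_div (one_le_card_of_one_le_sum he)
    _ ≤ 1 / #s * ∑ j ∈ s, e j := le_mul_of_one_le_right (by positivity) he

lemma one_div_two_mul_card_sq_lt_mean_sq (he : 1 ≤ ∑ j ∈ s, e j) :
    1 / (2 * (#s : ℝ) ^ 2) < 1 / #s * ∑ j ∈ s, e j ^ 2 := by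
  have hs := one_le_card_of_one_le_sum he
  have hsq : 1 ≤ #s * ∑ j ∈ s, e j ^ 2 := by
    nlinarith [sq_sum_le_card_mul_sum_sq (s := s) (f := e)]
  calc 1 / (2 * (#s : ℝ) ^ 2) < 1 / #s * (1 / #s) := by
        rw [one_div_mul_one_div, ← sq]
        apply one_div_lt_one_div_of_lt (by positivity)
        nlinarith
    _ ≤ 1 / #s * ∑ j ∈ s, e j ^ 2 := by
        gcongr
        exact (div_le_iff₀' (by positivity)).mpr hsq

lemma sup'_pos_of_one_le_sum (hs : s.Nonempty) (he : 1 ≤ ∑ j ∈ s, e j) :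
    0 < s.sup' hs e := by
  have hsum : ∑ j ∈ s, (0 : ι → ℝ) j < ∑ j ∈ s, e j := by
    simp only [Pi.zero_apply, sum_const_zero]
    linarith
  obtain ⟨j, hj, hej⟩ := exists_lt_of_sum_lt hsum
  exact hej.trans_le (le_sup' e hj)

end ErrorVector

/-- Reduction from coverage: for the training set consisting of `(R i, 0)` for
`i = 1,…,k` and `(B, 1)` (so `n = k+1` queries), if `⋃ R i` covers `B` then
every discrete distribution has `err_p > 1/(2n²)` for `p ∈ {1,2}` and
`err_∞ > 0`; conversely a point `q ∈ B` outside all `R i` yields a one-point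
distribution with zero error for `p ∈ {1, 2, ∞}`. -/
theorem stmt_13 (d k : ℕ) (R : Fin k → Set (Fin d → ℝ)) (B : Set (Fin d → ℝ)) :
    ((B ⊆ ⋃ i, R i) →
      ∀ (supp : Finset (Fin d → ℝ)) (w : (Fin d → ℝ) → ℝ),
        (∀ x ∈ supp, 0 < w x) → (∑ x ∈ supp, w x = 1) →
        (1/(2*((k:ℝ)+1)^2) <
          (1/((k:ℝ)+1)) * ((∑ i, |sel13 d supp w (R i) - 0|)
            + |sel13 d supp w B - 1|)) ∧
        (1/(2*((k:ℝ)+1)^2) <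
          (1/((k:ℝ)+1)) * ((∑ i, |sel13 d supp w (R i) - 0|^2)
            + |sel13 d supp w B - 1|^2)) ∧
        (0 < Finset.univ.sup' ⟨(0 : Fin (k+1)), Finset.mem_univ _⟩
          (Fin.snoc (fun i => |sel13 d supp w (R i) - 0|)
            (|sel13 d supp w B - 1|)))) ∧
    (∀ q : Fin d → ℝ, q ∈ B → (∀ i, q ∉ R i) →
      ((1/((k:ℝ)+1)) * ((∑ i, |sel13 d {q} (fun _ => 1) (R i) - 0|)
          + |sel13 d {q} (fun _ => 1) B - 1|) = 0) ∧
      ((1/((k:ℝ)+1)) * ((∑ i, |sel13 d {q} (fun _ => 1) (R i) - 0|^2)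
          + |sel13 d {q} (fun _ => 1) B - 1|^2) = 0) ∧
      (Finset.univ.sup' ⟨(0 : Fin (k+1)), Finset.mem_univ _⟩
        (Fin.snoc (fun i => |sel13 d {q} (fun _ => 1) (R i) - 0|)
          (|sel13 d {q} (fun _ => 1) B - 1|)) = 0)) := by
  refine ⟨fun hBR supp w hw _ => ?_, fun q hqB hqR => ?_⟩
  · have hw' : ∀ x ∈ supp, 0 ≤ w x := fun x hx => (hw x hx).le
    set e : Fin (k + 1) → ℝ :=
      Fin.snoc (fun i => |sel13 d supp w (R i) - 0|) (|sel13 d supp w B - 1|)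
    have he : 1 ≤ ∑ j, e j := by
      simpa [e] using one_le_sum_abs_add_abs_sub_one (s := univ)
        (fun i _ => sel13_nonneg hw' (R i)) (sel13_le_sum_of_subset_iUnion hBR hw')
    have h1 := one_div_two_mul_card_sq_lt_mean he
    have h2 := one_div_two_mul_card_sq_lt_mean_sq he
    simp only [e, card_univ, Fintype.card_fin, Nat.cast_add, Nat.cast_one,
      Fin.sum_univ_castSucc, Fin.snoc_castSucc, Fin.snoc_last] at h1 h2
    exact ⟨h1, h2, sup'_pos_of_one_le_sum _ he⟩
  · have hR (i : Fin k) : sel13 d {q} (fun _ => 1) (R i) = 0 := by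
      simp [sel13_singleton_one, hqR i]
    have hB : sel13 d {q} (fun _ => 1) B = 1 := by simp [sel13_singleton_one, hqB]
    have hzero : (Fin.snoc (fun i => |sel13 d {q} (fun _ => 1) (R i) - 0|)
        (|sel13 d {q} (fun _ => 1) B - 1|) : Fin (k + 1) → ℝ) = fun _ => 0 := by
      ext j
      cases j using Fin.lastCases <;> simp [hR, hB]
    refine ⟨by simp [hR, hB], by simp [hR, hB], ?_⟩
    rw [hzero]
    exact sup'_const _ _
end
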